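/- Every n-dimensional nilpotent Lie algebra L with dim L² = 1 is isomorphic to H(m) ⊕ A(n − 2m − 1) for some m ≥ 1. -/

import Mathlib

open Module Function

universe u v

/-! ### Product of Lie algebras -/

section ProdLie

variable (k : Type) [Field k]
variable (L₁ : Type*) (L₂ : Type*) [LieRing L₁] [LieRing L₂]

instance Prod.instLieRing : LieRing (L₁ × L₂) where
  bracket x y := (⁅x.1, y.1⁆, ⁅x.2, y.2⁆)
  add_lie x y z := by ext <;> exact add_lie _ _ _
  lie_add x y z := by ext <;> exact lie_add _ _ _
  lie_self x := by ext <;> exact lie_self _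
  leibniz_lie x y z := by ext <;> exact leibniz_lie _ _ _

instance Prod.instLieAlgebra [LieAlgebra k L₁] [LieAlgebra k L₂] :
    LieAlgebra k (L₁ × L₂) where
  lie_smul c x y := by ext <;> exact lie_smul _ _ _

end ProdLie

section Defs

variable (k : Type) [Field k]
variable (L : Type u) [LieRing L] [LieAlgebra k L]

/-- The derived subalgebra `L² = ⁅L, L⁆` as a Lie ideal. -/
def derived : LieIdeal k L := ⁅(⊤ : LieIdeal k L), (⊤ : LieIdeal k L)⁆

/-- A Lie algebra is capable if it is isomorphic to `H / Z(H)` for some Lie algebra `H`. -/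
def IsCapable : Prop :=
  ∃ (H : Type u) (_ : LieRing H) (_ : LieAlgebra k H),
    Nonempty (L ≃ₗ⁅k⁆ H ⧸ LieAlgebra.center k H)

/-- A surjective Lie algebra morphism with central kernel. -/
def IsCentralExtension {E : Type u} [LieRing E] [LieAlgebra k E] (φ : E →ₗ⁅k⁆ L) : Prop :=
  Function.Surjective φ ∧ φ.ker ≤ LieAlgebra.center k E

/-- The epicenter `Z^*(L)`: the intersection of the images `φ(Z(E))` over all central
extensions `φ : E → L`. -/
def epicenter : LieIdeal k L :=
  sInf {I : LieIdeal k L |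
    ∃ (E : Type u) (_ : LieRing E) (_ : LieAlgebra k E) (φ : E →ₗ⁅k⁆ L),
      IsCentralExtension k L φ ∧ (I : Set L) = φ '' (LieAlgebra.center k E)}

/-! ### The nonabelian exterior square -/

/-- The defining relations of the nonabelian exterior square of a Lie algebra. -/
def exteriorRels : Set (FreeLieAlgebra k (L × L)) :=
  {a | (∃ (x x' y : L), a = FreeLieAlgebra.of k (x + x', y) - FreeLieAlgebra.of k (x, y)
          - FreeLieAlgebra.of k (x', y)) ∨
       (∃ (x y y' : L), a = FreeLieAlgebra.of k (x, y + y') - FreeLieAlgebra.of k (x, y)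
          - FreeLieAlgebra.of k (x, y')) ∨
       (∃ (c : k) (x y : L), a = FreeLieAlgebra.of k (c • x, y) - c • FreeLieAlgebra.of k (x, y)) ∨
       (∃ (c : k) (x y : L), a = FreeLieAlgebra.of k (x, c • y) - c • FreeLieAlgebra.of k (x, y)) ∨
       (∃ (x x' y : L), a = FreeLieAlgebra.of k (⁅x, x'⁆, y) - FreeLieAlgebra.of k (x, ⁅x', y⁆)
          + FreeLieAlgebra.of k (x', ⁅x, y⁆)) ∨
       (∃ (x y y' : L), a = FreeLieAlgebra.of k (x, ⁅y, y'⁆) - FreeLieAlgebra.of k (⁅y', x⁆, y)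
          + FreeLieAlgebra.of k (⁅y, x⁆, y')) ∨
       (∃ (x y x' y' : L), a = ⁅FreeLieAlgebra.of k (x, y), FreeLieAlgebra.of k (x', y')⁆
          + FreeLieAlgebra.of k (⁅y, x⁆, ⁅x', y'⁆)) ∨
       (∃ (x : L), a = FreeLieAlgebra.of k (x, x))}

/-- The ideal of relations of the nonabelian exterior square. -/
noncomputable def exteriorIdeal : LieIdeal k (FreeLieAlgebra k (L × L)) :=
  LieSubmodule.lieSpan k _ (exteriorRels k L)

/-- The nonabelian exterior square `L ∧ L`. -/
abbrev ExteriorSquare := FreeLieAlgebra k (L × L) ⧸ exteriorIdeal k L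

variable {L} in
/-- The element `x ∧ y` of the nonabelian exterior square. -/
noncomputable def wedge (x y : L) : ExteriorSquare k L :=
  LieSubmodule.Quotient.mk' (exteriorIdeal k L) (FreeLieAlgebra.of k (x, y))

/-- The exterior center `Z^∧(L) = {x | x ∧ y = 0 for all y}`. -/
def exteriorCenter : Set L := {x | ∀ y : L, wedge k x y = 0}

end Defs

section Defs2

variable (k : Type) [Field k]
variable (L : Type u) [LieRing L] [LieAlgebra k L]

/-- The canonical free presentation `F(L) → L`. -/
noncomputable def pres : FreeLieAlgebra k L →ₗ⁅k⁆ L := FreeLieAlgebra.lift k id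

/-- The Schur multiplier computed from a presentation `ρ : F(L) → L'`,
namely `(ker ρ ∩ F²) / ⁅ker ρ, F⁆`. -/
abbrev multOf {L' : Type v} [LieRing L'] [LieAlgebra k L']
    (ρ : FreeLieAlgebra k L →ₗ⁅k⁆ L') : Type _ :=
  (ρ.ker ⊓ derived k (FreeLieAlgebra k L)).toSubmodule ⧸
    ((⁅ρ.ker, (⊤ : LieIdeal k (FreeLieAlgebra k L))⁆ :
        LieIdeal k (FreeLieAlgebra k L)).toSubmodule.comap
      (ρ.ker ⊓ derived k (FreeLieAlgebra k L)).toSubmodule.subtype)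

/-- The Schur multiplier `M(L) = (R ∩ F²)/⁅R, F⁆` for the canonical free
presentation `0 → R → F(L) → L → 0`. -/
noncomputable abbrev SchurMultiplier : Type _ := multOf k L (pres k L)

/-- The quotient map `L → L ⧸ N` as a morphism of Lie algebras. -/
def lieQuotMk (N : LieIdeal k L) : L →ₗ⁅k⁆ L ⧸ N :=
  { toLinearMap := (N : Submodule k L).mkQ
    map_lie' := rfl }

/-- The canonical presentation `F(L) → L ⧸ N` of a quotient of `L`. -/
noncomputable def presQ (N : LieIdeal k L) : FreeLieAlgebra k L →ₗ⁅k⁆ L ⧸ N :=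
  (lieQuotMk k L N).comp (pres k L)

end Defs2

section maps

variable (k : Type) [Field k]
variable (L : Type u) [LieRing L] [LieAlgebra k L]

lemma ker_le_kerQ (N : LieIdeal k L) : (pres k L).ker ≤ (presQ k L N).ker := by
  intro x hx
  rw [LieHom.mem_ker] at hx ⊢
  simp [presQ, LieHom.comp_apply, hx, lieQuotMk]

/-- The natural map `M(L) → M(L/N)` on Schur multipliers induced by a
(central) ideal `N` of `L`. -/
noncomputable def multMap (N : LieIdeal k L) :
    SchurMultiplier k L →ₗ[k] multOf k L (presQ k L N) :=
  Submodule.mapQ _ _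
    (Submodule.inclusion (by
      exact_mod_cast inf_le_inf_right (derived k (FreeLieAlgebra k L)) (ker_le_kerQ k L N)))
    (by
      intro x hx
      simp only [Submodule.mem_comap] at hx ⊢
      have hmono : (⁅(pres k L).ker, (⊤ : LieIdeal k (FreeLieAlgebra k L))⁆ :
          LieIdeal k (FreeLieAlgebra k L)) ≤
          ⁅(presQ k L N).ker, (⊤ : LieIdeal k (FreeLieAlgebra k L))⁆ :=
        LieSubmodule.mono_lie_left _ (ker_le_kerQ k L N)
      exact hmono hx)

end maps

section lift

variable {k : Type} [Field k]
variable {L : Type u} [LieRing L] [LieAlgebra k L]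
variable {L' : Type v} [LieRing L'] [LieAlgebra k L']

/-- Universal property of quotients of Lie algebras. -/
def lieQuotLift (I : LieIdeal k L) (f : L →ₗ⁅k⁆ L') (h : I ≤ f.ker) : (L ⧸ I) →ₗ⁅k⁆ L' :=
  { toLinearMap := (I : Submodule k L).liftQ f.toLinearMap (fun x hx => by
      have := h hx; rwa [LieHom.mem_ker] at this)
    map_lie' := by
      rintro ⟨x⟩ ⟨y⟩
      exact f.map_lie x y }

@[simp] lemma lieQuotLift_mk (I : LieIdeal k L) (f : L →ₗ⁅k⁆ L') (h : I ≤ f.ker) (x : L) :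
    lieQuotLift I f h (lieQuotMk k L I x) = f x := rfl

end lift

section extmaps

variable (k : Type) [Field k]
variable (L : Type u) [LieRing L] [LieAlgebra k L]

/-- `x ∧ y` rewritten via the quotient morphism. -/
lemma wedge_def (x y : L) :
    wedge k x y = lieQuotMk k _ (exteriorIdeal k L) (FreeLieAlgebra.of k (x, y)) := rfl

/-- The lift to the free Lie algebra of the map `(x, y) ↦ x ∧ y` valued in the
exterior square of a quotient of `L`. -/
noncomputable def extAux (N : LieIdeal k L) :
    FreeLieAlgebra k (L × L) →ₗ⁅k⁆ ExteriorSquare k (L ⧸ N) :=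
  FreeLieAlgebra.lift k fun p => wedge k (lieQuotMk k L N p.1) (lieQuotMk k L N p.2)

lemma wedge_mem_rel_zero {M : Type v} [LieRing M] [LieAlgebra k M]
    {a : FreeLieAlgebra k (M × M)} (ha : a ∈ exteriorRels k M) :
    lieQuotMk k _ (exteriorIdeal k M) a = 0 := by
  have h : a ∈ exteriorIdeal k M := LieSubmodule.subset_lieSpan ha
  show (exteriorIdeal k M : Submodule k (FreeLieAlgebra k (M × M))).mkQ a = 0
  rw [Submodule.mkQ_apply, Submodule.Quotient.mk_eq_zero]
  exact h

lemma extAux_rels (N : LieIdeal k L) : exteriorIdeal k L ≤ (extAux k L N).ker := by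
  rw [exteriorIdeal, LieSubmodule.lieSpan_le]
  intro a ha
  rw [SetLike.mem_coe, LieHom.mem_ker]
  set q := lieQuotMk k L N with hq
  have key : ∀ x y : L, extAux k L N (FreeLieAlgebra.of k (x, y)) =
      lieQuotMk k _ (exteriorIdeal k (L ⧸ N)) (FreeLieAlgebra.of k (q x, q y)) := by
    intro x y; rw [extAux, FreeLieAlgebra.lift_of_apply]; rfl
  obtain h|h|h|h|h|h|h|h := ha
  · obtain ⟨x, x', y, rfl⟩ := h
    simp only [map_sub, key]
    rw [← map_sub, ← map_sub]
    apply wedge_mem_rel_zero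
    exact Or.inl ⟨q x, q x', q y, by rw [map_add]⟩
  · obtain ⟨x, y, y', rfl⟩ := h
    simp only [map_sub, key]
    rw [← map_sub, ← map_sub]
    apply wedge_mem_rel_zero
    exact Or.inr (Or.inl ⟨q x, q y, q y', by rw [map_add]⟩)
  · obtain ⟨c, x, y, rfl⟩ := h
    simp only [map_sub, map_smul, key]
    rw [← map_smul (lieQuotMk k _ (exteriorIdeal k (L ⧸ N))) c
      (FreeLieAlgebra.of k (q x, q y)), ← map_sub]
    apply wedge_mem_rel_zero
    exact Or.inr (Or.inr (Or.inl ⟨c, q x, q y, rfl⟩))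
  · obtain ⟨c, x, y, rfl⟩ := h
    simp only [map_sub, map_smul, key]
    rw [← map_smul (lieQuotMk k _ (exteriorIdeal k (L ⧸ N))) c
      (FreeLieAlgebra.of k (q x, q y)), ← map_sub]
    apply wedge_mem_rel_zero
    exact Or.inr (Or.inr (Or.inr (Or.inl ⟨c, q x, q y, rfl⟩)))
  · obtain ⟨x, x', y, rfl⟩ := h
    simp only [map_sub, map_add, key]
    rw [← map_sub, ← map_add]
    apply wedge_mem_rel_zero
    refine Or.inr (Or.inr (Or.inr (Or.inr (Or.inl ⟨q x, q x', q y, ?_⟩))))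
    simp [LieHom.map_lie]
  · obtain ⟨x, y, y', rfl⟩ := h
    simp only [map_sub, map_add, key]
    rw [← map_sub, ← map_add]
    apply wedge_mem_rel_zero
    refine Or.inr (Or.inr (Or.inr (Or.inr (Or.inr (Or.inl ⟨q x, q y, q y', ?_⟩)))))
    simp [LieHom.map_lie]
  · obtain ⟨x, y, x', y', rfl⟩ := h
    simp only [map_add, LieHom.map_lie, key]
    rw [← LieHom.map_lie, ← map_add]
    apply wedge_mem_rel_zero
    refine Or.inr (Or.inr (Or.inr (Or.inr (Or.inr (Or.inr (Or.inl
      ⟨q x, q y, q x', q y', ?_⟩))))))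
    simp [LieHom.map_lie]
  · obtain ⟨x, rfl⟩ := h
    rw [key]
    apply wedge_mem_rel_zero
    exact Or.inr (Or.inr (Or.inr (Or.inr (Or.inr (Or.inr (Or.inr ⟨q x, rfl⟩))))))

/-- The natural morphism `L ∧ L → (L/N) ∧ (L/N)` of exterior squares. -/
noncomputable def extSqMap (N : LieIdeal k L) :
    ExteriorSquare k L →ₗ⁅k⁆ ExteriorSquare k (L ⧸ N) :=
  lieQuotLift (exteriorIdeal k L) (extAux k L N) (extAux_rels k L N)

/-- The commutator morphism `L ∧ L → L`, `x ∧ y ↦ ⁅x, y⁆`. -/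
noncomputable def commutatorMap : ExteriorSquare k L →ₗ⁅k⁆ L :=
  lieQuotLift (exteriorIdeal k L) (FreeLieAlgebra.lift k fun p : L × L => ⁅p.1, p.2⁆)
    (by
      rw [exteriorIdeal, LieSubmodule.lieSpan_le]
      intro a ha
      rw [SetLike.mem_coe, LieHom.mem_ker]
      obtain h|h|h|h|h|h|h|h := ha
      · obtain ⟨x, x', y, rfl⟩ := h
        simp [FreeLieAlgebra.lift_of_apply, add_lie]
      · obtain ⟨x, y, y', rfl⟩ := h
        simp [FreeLieAlgebra.lift_of_apply, lie_add]
      · obtain ⟨c, x, y, rfl⟩ := h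
        simp [FreeLieAlgebra.lift_of_apply, smul_lie]
      · obtain ⟨c, x, y, rfl⟩ := h
        simp [FreeLieAlgebra.lift_of_apply, lie_smul]
      · obtain ⟨x, x', y, rfl⟩ := h
        simp only [map_sub, map_add, FreeLieAlgebra.lift_of_apply, lie_lie]
        abel
      · obtain ⟨x, y, y', rfl⟩ := h
        simp only [map_sub, map_add, FreeLieAlgebra.lift_of_apply, lie_lie]
        rw [leibniz_lie x y' y, ← lie_skew y ⁅x, y'⁆]
        abel
      · obtain ⟨x, y, x', y', rfl⟩ := h
        simp only [map_add, LieHom.map_lie, FreeLieAlgebra.lift_of_apply]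
        rw [← lie_skew y x]
        simp
      · obtain ⟨x, rfl⟩ := h
        simp [FreeLieAlgebra.lift_of_apply])

end extmaps

section more

variable (k : Type) [Field k]
variable (L : Type u) [LieRing L] [LieAlgebra k L]

/-- A Lie algebra is a Heisenberg algebra `H(m)` (of dimension `2m + 1`) iff its derived
subalgebra coincides with its centre and is one-dimensional, and it has dimension `2m + 1`. -/
def IsHeisenberg (m : ℕ) : Prop :=
  derived k L = LieAlgebra.center k L ∧ Module.finrank k L = 2 * m + 1 ∧
    Module.finrank k (derived k L) = 1

/-- A vector space regarded as an abelian Lie algebra. -/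
def AbelianLieOf (V : Type v) : Type v := V

instance (V : Type v) [AddCommGroup V] : AddCommGroup (AbelianLieOf V) :=
  inferInstanceAs (AddCommGroup V)

instance (V : Type v) [AddCommGroup V] [Module k V] : Module k (AbelianLieOf V) :=
  inferInstanceAs (Module k V)

instance (V : Type v) [AddCommGroup V] : LieRing (AbelianLieOf V) where
  bracket _ _ := 0
  add_lie _ _ _ := by simp
  lie_add _ _ _ := by simp
  lie_self _ := rfl
  leibniz_lie _ _ _ := by simp

instance (V : Type v) [AddCommGroup V] [Module k V] : LieAlgebra k (AbelianLieOf V) where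
  lie_smul _ _ _ := by
    show (0 : AbelianLieOf V) = _ • (0 : AbelianLieOf V)
    simp

/-- A decomposition of `L` as the direct sum of a Heisenberg algebra `H(m)` and an
abelian Lie algebra of dimension `j`. -/
structure HeisenbergAbelianDecomp (m j : ℕ) where
  H : Type u
  A : Type u
  [instHL : LieRing H]
  [instHA : LieAlgebra k H]
  [instAL : LieRing A]
  [instAA : LieAlgebra k A]
  heis : IsHeisenberg k H m
  abel : IsLieAbelian A
  dimA : Module.finrank k A = j
  equiv : Nonempty (L ≃ₗ⁅k⁆ H × A)

/-- The projection `H × A → H` as a Lie algebra morphism. -/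
def lieFst (H A : Type u) [LieRing H] [LieAlgebra k H] [LieRing A] [LieAlgebra k A] :
    H × A →ₗ⁅k⁆ H :=
  { toLinearMap := LinearMap.fst k H A
    map_lie' := rfl }

end more

/-!
The derived algebra is spanned by a single vector `z`, and `z` is central: each `ad x` is
nilpotent and acts on the line `k ∙ z` by a scalar. Writing `⁅x, y⁆ = B x y • z` defines an
alternating form `B` whose radical is the centre `Z`, so `B` is nondegenerate on a complement
`W` of `Z`, and `dim W = 2m` because a maximal isotropic subspace is its own orthogonal.
Then `H = W ⊕ k ∙ z` is a Heisenberg algebra, and a complement `A` of `k ∙ z` inside `Z` is an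
abelian ideal with `L ≃ H × A`.
-/

theorem LieModule.lie_eq_zero_of_lie_mem_span_singleton {k L M : Type*} [Field k] [LieRing L]
    [LieAlgebra k L] [AddCommGroup M] [Module k M] [LieRingModule L M] [LieModule k L M]
    [LieModule.IsNilpotent L M] {x : L} {m : M} (h : ⁅x, m⁆ ∈ k ∙ m) : ⁅x, m⁆ = 0 := by
  obtain ⟨c, hc⟩ := Submodule.mem_span_singleton.1 h
  have hpow : ∀ n, (LieModule.toEnd k L M x ^ n) m = c ^ n • m := by
    intro n
    induction n with
    | zero => simp
    | succ n ih => rw [pow_succ', Module.End.mul_apply, ih, map_smul, LieModule.toEnd_apply_apply,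
        ← hc, smul_smul, pow_succ]
  obtain ⟨n, hn⟩ := LieModule.isNilpotent_toEnd_of_isNilpotent k L M x
  have h0 : c ^ n • m = 0 := by rw [← hpow n, hn, LinearMap.zero_apply]
  rcases smul_eq_zero.1 h0 with hcn | hm
  · rw [← hc, eq_zero_of_pow_eq_zero hcn, zero_smul]
  · rw [hm, lie_zero]

theorem isCompl_sup_inf_of_le {α : Type*} [Lattice α] [BoundedOrder α] [IsModularLattice α]
    {W Z D C : α} (hWZ : IsCompl W Z) (hDZ : D ≤ Z) (hDC : IsCompl D C) :
    IsCompl (W ⊔ D) (C ⊓ Z) := by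
  constructor
  · rw [disjoint_iff, ← inf_assoc, inf_right_comm, sup_comm, sup_inf_assoc_of_le W hDZ,
      hWZ.inf_eq_bot, sup_bot_eq, hDC.inf_eq_bot]
  · rw [codisjoint_iff, sup_assoc, ← sup_inf_assoc_of_le C hDZ, hDC.sup_eq_top, top_inf_eq,
      hWZ.sup_eq_top]

namespace LinearMap.BilinForm

variable {K V : Type*} [Field K] [AddCommGroup V] [Module K V] {B : LinearMap.BilinForm K V}

theorem sup_span_singleton_le_orthogonal (hB : B.IsAlt) {U : Submodule K V}
    (hU : U ≤ B.orthogonal U) {v : V} (hv : v ∈ B.orthogonal U) :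
    U ⊔ K ∙ v ≤ B.orthogonal (U ⊔ K ∙ v) := by
  intro a ha
  rw [mem_orthogonal_iff]
  intro b hb
  obtain ⟨u, hu, _, hc, rfl⟩ := Submodule.mem_sup.1 ha
  obtain ⟨c, rfl⟩ := Submodule.mem_span_singleton.1 hc
  obtain ⟨u', hu', _, hd, rfl⟩ := Submodule.mem_sup.1 hb
  obtain ⟨d, rfl⟩ := Submodule.mem_span_singleton.1 hd
  have huu' : B u' u = 0 := hU hu u' hu'
  have hvu : B u v = 0 := hv u hu
  have hvu' : B u' v = 0 := hv u' hu'
  have hvu_symm : B v u = 0 := by rw [← LinearMap.IsAlt.neg hB u v, hvu, neg_zero]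
  simp [huu', hvu', hvu_symm, hB v]

theorem even_finrank_of_isAlt [FiniteDimensional K V] (hB : B.IsAlt) (hnd : B.Nondegenerate) :
    Even (finrank K V) := by
  obtain ⟨U, hU, hmax⟩ :=
    wellFounded_gt.has_min {U : Submodule K V | U ≤ B.orthogonal U} ⟨⊥, Set.mem_ofPred.2 bot_le⟩
  have hUeq : B.orthogonal U = U := by
    refine le_antisymm (fun v hv => ?_) hU
    by_contra hvU
    exact hmax _ (sup_span_singleton_le_orthogonal hB hU hv)
      (left_lt_sup.2 ((Submodule.span_singleton_le_iff_mem v U).not.2 hvU))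
  have hdim := finrank_orthogonal hnd U
  rw [hUeq] at hdim
  exact ⟨finrank K U, by have := Submodule.finrank_le U; omega⟩

end LinearMap.BilinForm

section LieAlgebra

variable {k : Type} [Field k] {L : Type u} [LieRing L] [LieAlgebra k L]

theorem lie_mem_derived (x y : L) : ⁅x, y⁆ ∈ derived k L :=
  LieSubmodule.lie_mem_lie (LieSubmodule.mem_top x) (LieSubmodule.mem_top y)

theorem derived_eq_bot_iff_center_eq_top : derived k L = ⊥ ↔ LieAlgebra.center k L = ⊤ := by
  rw [← LieAlgebra.isLieAbelian_iff_center_eq_top, derived, LieSubmodule.lie_eq_bot_iff]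
  exact ⟨fun h => ⟨fun x y => h x trivial y trivial⟩, fun h x _ y _ => trivial_lie_zero L L x y⟩

theorem exists_bilinForm_lie_eq_smul {z : L} (hz : z ≠ 0) (h : ∀ x y : L, ⁅x, y⁆ ∈ k ∙ z) :
    ∃ B : LinearMap.BilinForm k L, B.IsAlt ∧ ∀ x y, ⁅x, y⁆ = B x y • z := by
  obtain ⟨f, hf⟩ := Module.Projective.exists_dual_eq_one k hz
  refine ⟨(LieModule.toEnd k L L : L →ₗ[k] Module.End k L).compr₂ f, fun x => ?_, fun x y => ?_⟩
  · simp
  · obtain ⟨c, hc⟩ := Submodule.mem_span_singleton.1 (h x y)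
    simp [← hc, hf]

theorem isHeisenberg_of_center_le_span_singleton {z : L} {m : ℕ} (hm : 1 ≤ m)
    (hdim : finrank k L = 2 * m + 1) (hz : z ∈ LieAlgebra.center k L)
    (hder : (derived k L).toSubmodule ≤ k ∙ z)
    (hcen : (LieAlgebra.center k L).toSubmodule ≤ k ∙ z) : IsHeisenberg k L m := by
  have hcen_eq : (LieAlgebra.center k L).toSubmodule = k ∙ z :=
    le_antisymm hcen ((Submodule.span_singleton_le_iff_mem _ _).2 hz)
  have hder_ne : derived k L ≠ ⊥ := by
    intro h
    have htop : (⊤ : Submodule k L) = k ∙ z := by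
      rw [← hcen_eq, derived_eq_bot_iff_center_eq_top.1 h, LieSubmodule.top_toSubmodule]
    have hle := finrank_span_le_card (R := k) ({z} : Set L)
    rw [← htop, finrank_top] at hle
    simp only [Set.toFinset_singleton, Finset.card_singleton] at hle
    omega
  have hz0 : z ≠ 0 := by
    rintro rfl
    rw [Submodule.span_singleton_eq_bot.2 rfl, le_bot_iff] at hder
    exact hder_ne ((LieSubmodule.toSubmodule_eq_bot _).1 hder)
  have hder_eq : (derived k L).toSubmodule = k ∙ z :=
    ((nonzero_span_atom z hz0).le_iff.1 hder).resolve_left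
      (fun h => hder_ne ((LieSubmodule.toSubmodule_eq_bot _).1 h))
  refine ⟨LieSubmodule.toSubmodule_injective (hder_eq.trans hcen_eq.symm), hdim, ?_⟩
  show finrank k (derived k L).toSubmodule = 1
  rw [hder_eq, finrank_span_singleton hz0]

noncomputable def LieSubalgebra.prodEquivOfIsCompl {H A : LieSubalgebra k L}
    (hHA : IsCompl H.toSubmodule A.toSubmodule)
    (hA : A.toSubmodule ≤ (LieAlgebra.center k L).toSubmodule) : L ≃ₗ⁅k⁆ H × A :=
  have hAc : ∀ a ∈ A, ∀ x : L, ⁅x, a⁆ = 0 := fun a ha =>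
    (LieModule.mem_maxTrivSubmodule k L L a).1 (hA ha)
  (LieEquiv.ofBijective
    { toLinearMap := H.toSubmodule.subtype.coprod A.toSubmodule.subtype
      map_lie' := by
        rintro ⟨h, a⟩ ⟨h', a'⟩
        have hah' : ⁅(a : L), (h' : L)⁆ = 0 := by rw [← lie_skew, hAc a a.2, neg_zero]
        simp [hah', hAc a' a'.2] }
    (Submodule.prodEquivOfIsCompl _ _ hHA).bijective).symm

section BracketForm

variable {z : L} {B : LinearMap.BilinForm k L} (hB : ∀ x y, ⁅x, y⁆ = B x y • z)
include hB

theorem eq_zero_of_forall_mem_isCompl_center {W : Submodule k L}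
    (hW : IsCompl (LieAlgebra.center k L).toSubmodule W) {w : L} (hw : w ∈ W)
    (h : ∀ w' ∈ W, B w w' = 0) : w = 0 := by
  have hwc : w ∈ (LieAlgebra.center k L).toSubmodule := by
    refine (LieModule.mem_maxTrivSubmodule k L L w).2 fun y => ?_
    obtain ⟨c, hc, w', hw', rfl⟩ := Submodule.mem_sup.1 (hW.sup_eq_top ▸ Submodule.mem_top (x := y))
    rw [← lie_skew, neg_eq_zero, lie_add, (LieModule.mem_maxTrivSubmodule k L L c).1 hc w, hB,
      h w' hw', zero_smul, add_zero]
  have hw0 : w ∈ (LieAlgebra.center k L).toSubmodule ⊓ W := ⟨hwc, hw⟩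
  rwa [hW.inf_eq_bot, Submodule.mem_bot] at hw0

theorem nondegenerate_restrict_of_isCompl_center (hBalt : B.IsAlt) {W : Submodule k L}
    (hW : IsCompl (LieAlgebra.center k L).toSubmodule W) : (B.restrict W).Nondegenerate :=
  (LinearMap.IsRefl.nondegenerate_iff_separatingLeft
    (LinearMap.IsAlt.isRefl (B := B.restrict W) fun w => hBalt w)).2 fun w hw => Subtype.ext <| eq_zero_of_forall_mem_isCompl_center hB hW w.2 fun w' hw' => hw ⟨w', hw'⟩

theorem isHeisenberg_of_toSubmodule_eq_sup_span_singleton [FiniteDimensional k L] (hz0 : z ≠ 0)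
    (hz : z ∈ LieAlgebra.center k L) {W : Submodule k L}
    (hW : IsCompl (LieAlgebra.center k L).toSubmodule W) {m : ℕ} (hm : 1 ≤ m)
    (hWm : finrank k W = 2 * m) {H : LieSubalgebra k L} (hH : H.toSubmodule = W ⊔ k ∙ z) :
    IsHeisenberg k H m := by
  have hmem : ∀ x, x ∈ H ↔ x ∈ W ⊔ k ∙ z := fun x => by rw [← hH, LieSubalgebra.mem_toSubmodule]
  have hzH : z ∈ H := (hmem z).2 (Submodule.mem_sup_right (Submodule.mem_span_singleton_self z))
  have hzW : z ∉ W := fun hzW => hz0 <| by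
    simpa [hW.inf_eq_bot] using Submodule.mem_inf.2 ⟨hz, hzW⟩
  have hcen : ∀ d ∈ k ∙ z, ∀ y : L, ⁅y, d⁆ = 0 := fun d hd =>
    (LieModule.mem_maxTrivSubmodule k L L d).1 ((Submodule.span_singleton_le_iff_mem _ _).2 hz hd)
  refine isHeisenberg_of_center_le_span_singleton (z := ⟨z, hzH⟩) hm ?_ ?_ ?_ ?_
  · show finrank k H.toSubmodule = 2 * m + 1
    rw [hH, Submodule.finrank_sup_span_singleton hzW, hWm]
  · exact (LieModule.mem_maxTrivSubmodule k H H _).2 fun y =>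
      Subtype.ext (hcen z (Submodule.mem_span_singleton_self z) y)
  · rw [derived, LieSubmodule.lieIdeal_oper_eq_linear_span, Submodule.span_le]
    rintro _ ⟨x, y, rfl⟩
    exact Submodule.mem_span_singleton.2 ⟨B x y, Subtype.ext (hB x y).symm⟩
  · intro x hx
    obtain ⟨w, hw, d, hd, hxwd⟩ := Submodule.mem_sup.1 ((hmem x).1 x.2)
    have hw0 : w = 0 := by
      refine eq_zero_of_forall_mem_isCompl_center hB hW hw fun w' hw' => ?_
      have hw'H : w' ∈ H := (hmem w').2 (Submodule.mem_sup_left hw')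
      have hxw' : ⁅w', (x : L)⁆ = 0 :=
        congrArg Subtype.val ((LieModule.mem_maxTrivSubmodule k H H x).1 hx ⟨w', hw'H⟩)
      have hww' : ⁅w, w'⁆ = 0 := by
        rw [← lie_skew, neg_eq_zero, ← add_sub_cancel_right w d, hxwd, lie_sub, hxw',
          hcen d hd, sub_zero]
      exact (smul_eq_zero_iff_left hz0).1 (hB w w' ▸ hww')
    obtain ⟨c, hc⟩ := Submodule.mem_span_singleton.1 hd
    exact Submodule.mem_span_singleton.2 ⟨c, Subtype.ext (by simp [← hxwd, hw0, ← hc])⟩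

end BracketForm

theorem exists_heisenbergAbelianDecomp_of_derived_eq_span_singleton [FiniteDimensional k L]
    {z : L} (hz0 : z ≠ 0) (hz : z ∈ LieAlgebra.center k L)
    (hder : (derived k L).toSubmodule = k ∙ z) :
    ∃ m : ℕ, 1 ≤ m ∧ Nonempty (HeisenbergAbelianDecomp k L m (finrank k L - (2 * m + 1))) := by
  obtain ⟨B, hBalt, hB⟩ :=
    exists_bilinForm_lie_eq_smul hz0 fun x y => hder.le (lie_mem_derived x y)
  set Z := (LieAlgebra.center k L).toSubmodule
  have hZ : ∀ c ∈ Z, ∀ y : L, ⁅c, y⁆ = 0 := fun c hc y => by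
    rw [← lie_skew, (LieModule.mem_maxTrivSubmodule k L L c).1 hc y, neg_zero]
  obtain ⟨W, hW⟩ := Submodule.exists_isCompl Z
  obtain ⟨m, hm⟩ := LinearMap.BilinForm.even_finrank_of_isAlt (B := B.restrict W)
    (fun w => hBalt w) (nondegenerate_restrict_of_isCompl_center hB hBalt hW)
  have hm1 : 1 ≤ m := by
    by_contra! hm0
    have hWbot : W = ⊥ := Submodule.finrank_eq_zero.1 (by omega)
    have hZtop : Z = ⊤ := by simpa [hWbot] using hW.sup_eq_top
    rw [LieSubmodule.toSubmodule_eq_top, ← derived_eq_bot_iff_center_eq_top] at hZtop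
    rw [hZtop, LieSubmodule.bot_toSubmodule, eq_comm, Submodule.span_singleton_eq_bot] at hder
    exact hz0 hder
  obtain ⟨C, hC⟩ := Submodule.exists_isCompl (k ∙ z)
  let H : LieSubalgebra k L :=
    { toSubmodule := W ⊔ k ∙ z
      lie_mem' := fun {x y} _ _ => Submodule.mem_sup_right (hB x y ▸ Submodule.smul_mem _ _
        (Submodule.mem_span_singleton_self z)) }
  let A : LieSubalgebra k L :=
    { toSubmodule := C ⊓ Z
      lie_mem' := fun {x y} hx _ => by rw [hZ x hx.2 y]; exact (C ⊓ Z).zero_mem }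
  have hHA : IsCompl H.toSubmodule A.toSubmodule :=
    isCompl_sup_inf_of_le hW.symm ((Submodule.span_singleton_le_iff_mem _ _).2 hz) hC
  have hH := isHeisenberg_of_toSubmodule_eq_sup_span_singleton hB hz0 hz hW hm1
    (by omega) (H := H) rfl
  refine ⟨m, hm1, ⟨{
    H := H
    A := A
    heis := hH
    abel := ⟨fun a b => Subtype.ext (hZ a a.2.2 b)⟩
    dimA := ?_
    equiv := ⟨LieSubalgebra.prodEquivOfIsCompl hHA inf_le_right⟩ }⟩⟩
  · have hsum := Submodule.finrank_add_eq_of_isCompl hHA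
    have hdimH : finrank k H.toSubmodule = 2 * m + 1 := hH.2.1
    change finrank k A.toSubmodule = _
    omega

end LieAlgebra

/-- every `n`-dimensional nilpotent Lie algebra with one-dimensional derived
subalgebra is isomorphic to `H(m) ⊕ A(n - 2m - 1)` for some `m ≥ 1`. -/
theorem nilpotent_dim_derived_one_classification (k : Type) [Field k] (L : Type u)
    [LieRing L] [LieAlgebra k L] [Module.Finite k L] [LieRing.IsNilpotent L]
    (hd : Module.finrank k (derived k L) = 1) :
    ∃ m : ℕ, 1 ≤ m ∧
      Nonempty (HeisenbergAbelianDecomp k L m (Module.finrank k L - (2 * m + 1))) := by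
  obtain ⟨⟨z, hzD⟩, hz0, -⟩ := finrank_eq_one_iff'.1 hd
  replace hz0 : z ≠ 0 := fun h => hz0 (Subtype.ext h)
  have hder := eq_span_singleton_of_mem_of_finrank_eq_one hd hzD hz0
  have hz : z ∈ LieAlgebra.center k L := (LieModule.mem_maxTrivSubmodule k L L z).2 fun y =>
    LieModule.lie_eq_zero_of_lie_mem_span_singleton (hder.le (lie_mem_derived y z))
  exact exists_heisenbergAbelianDecomp_of_derived_eq_span_singleton hz0 hz hder
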